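/- arXiv:2102.04909 — 2 statements merged into one kernel-verified Lean document; each statement's English description precedes it below -/
import Mathlib

section
/- In every allocation instance with n agents and additive valuations, every half-fair allocation A = (A_1,…,A_n) gives every agent i value v_i(A_i) at least (n/(2n−1))·TPS_i, i.e., at least an n/(2n−1) fraction of her truncated proportional share. -/
/-!
Cap every item value at `t = TPS_i`; by the fixed-point equation the capped values sum to `n t`.
With `x = v_i(A_i)`, half-fairness bounds the capped value of every bundle with two or more items
by `2x`, a bundle with at most one item has capped value at most `t`, and agent `i`'s own bundle
contributes at most `x`. Hence `n t ≤ x + (n - 1) max(t, 2x)`, which rules out `t > 2x` and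
then gives `n t ≤ (2n - 1) x`.
-/

open Finset

/-- The value of a bundle `S` under an additive valuation with item values `v`. -/
def val {ι : Type*} (v : ι → ℝ) (S : Finset ι) : ℝ := ∑ j ∈ S, v j

/-- `A` is an allocation: the bundles are pairwise disjoint and cover all items. -/
def isAlloc {ι : Type*} [Fintype ι] [DecidableEq ι] {n : ℕ} (A : Fin n → Finset ι) : Prop :=
  (∀ i j : Fin n, i ≠ j → Disjoint (A i) (A j)) ∧ Finset.univ.biUnion A = Finset.univ

/-- `t` is the truncated proportional share `TPS(k, S, v)`: the largest `t ≥ 0`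
with `(1/k) · Σ_{j ∈ S} min(v j, t) = t`. -/
def isTPS {ι : Type*} (k : ℕ) (S : Finset ι) (v : ι → ℝ) (t : ℝ) : Prop :=
  IsGreatest {t' : ℝ | 0 ≤ t' ∧ (∑ j ∈ S, min (v j) t') / k = t'} t

/-- An allocation is half-fair if whenever a bundle `A j` has more than one item,
every agent `i` values her own bundle at least half as much as `A j`. -/
def halfFair {ι : Type*} [Fintype ι] {n : ℕ} (v : Fin n → ι → ℝ)
    (A : Fin n → Finset ι) : Prop :=
  ∀ i j : Fin n, 1 < (A j).card → val (v i) (A i) ≥ (1 / 2) * val (v i) (A j)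

section

variable {ι : Type*}

lemma isTPS.sum_min_eq {k : ℕ} {S : Finset ι} {v : ι → ℝ} {t : ℝ} (h : isTPS k S v t)
    (hk : k ≠ 0) : ∑ j ∈ S, min (v j) t = k * t := by
  have hfix := h.1.2
  rw [div_eq_iff (Nat.cast_ne_zero.mpr hk)] at hfix
  linarith

lemma sum_min_le_val (v : ι → ℝ) (t : ℝ) (s : Finset ι) : ∑ j ∈ s, min (v j) t ≤ val v s :=
  sum_le_sum fun _ _ => min_le_left _ _

lemma sum_min_le_of_card_le_one {s : Finset ι} (v : ι → ℝ) {t : ℝ} (ht : 0 ≤ t)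
    (hs : s.card ≤ 1) : ∑ j ∈ s, min (v j) t ≤ t :=
  calc ∑ j ∈ s, min (v j) t ≤ s.card • t := sum_le_card_nsmul _ _ _ fun _ _ => min_le_right _ _
    _ ≤ t := by
      rw [nsmul_eq_mul]
      exact mul_le_of_le_one_left ht (by exact_mod_cast hs)

lemma isAlloc.sum_eq [Fintype ι] [DecidableEq ι] {n : ℕ} {A : Fin n → Finset ι}
    (hA : isAlloc A) {M : Type*} [AddCommMonoid M] (f : ι → M) :
    ∑ j, f j = ∑ k, ∑ j ∈ A k, f j := by
  rw [← sum_biUnion fun a _ b _ hab => hA.1 a b hab, hA.2]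

lemma halfFair.sum_min_le_max [Fintype ι] {n : ℕ} {v : Fin n → ι → ℝ} {A : Fin n → Finset ι}
    (h : halfFair v A) (i k : Fin n) {t : ℝ} (ht : 0 ≤ t) :
    ∑ j ∈ A k, min (v i j) t ≤ max t (2 * val (v i) (A i)) := by
  rcases le_or_gt (A k).card 1 with hk | hk
  · exact (sum_min_le_of_card_le_one _ ht hk).trans (le_max_left _ _)
  · have hfair := h i k hk
    calc ∑ j ∈ A k, min (v i j) t ≤ val (v i) (A k) := sum_min_le_val _ _ _
      _ ≤ 2 * val (v i) (A i) := by linarith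
      _ ≤ _ := le_max_right _ _

lemma div_mul_le_of_mul_le_add_mul_max {n t x : ℝ} (hn : 1 ≤ n) (ht : 0 ≤ t)
    (h : n * t ≤ x + (n - 1) * max t (2 * x)) : n / (2 * n - 1) * t ≤ x := by
  rw [div_mul_eq_mul_div, div_le_iff₀ (by linarith)]
  rcases le_total t (2 * x) with htx | hxt
  · rw [max_eq_right htx] at h
    linarith
  · rw [max_eq_left hxt] at h
    nlinarith

end

theorem stmt3_general {ι : Type*} [Fintype ι] [DecidableEq ι] (n : ℕ)
    (v : Fin n → ι → ℝ)
    (A : Fin n → Finset ι) (hA : isAlloc A) (hhf : halfFair v A)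
    (i : Fin n) (tps : ℝ) (htps : isTPS n Finset.univ (v i) tps) :
    val (v i) (A i) ≥ ((n : ℝ) / (2 * (n : ℝ) - 1)) * tps := by
  have hn : 1 ≤ n := i.pos
  have ht : 0 ≤ tps := htps.1.1
  set x := val (v i) (A i)
  have hcount : ∑ k ∈ univ.erase i, ∑ j ∈ A k, min (v i j) tps ≤ (n - 1 : ℝ) * max tps (2 * x) :=
    calc _ ≤ (univ.erase i).card • max tps (2 * x) :=
          sum_le_card_nsmul _ _ _ fun k _ => hhf.sum_min_le_max i k ht
      _ = (n - 1 : ℝ) * max tps (2 * x) := by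
          rw [card_erase_of_mem (mem_univ i), card_univ, Fintype.card_fin, nsmul_eq_mul,
            Nat.cast_sub hn, Nat.cast_one]
  refine div_mul_le_of_mul_le_add_mul_max (by exact_mod_cast hn) ht ?_
  calc (n : ℝ) * tps = ∑ j, min (v i j) tps := (htps.sum_min_eq (by omega)).symm
    _ = ∑ k, ∑ j ∈ A k, min (v i j) tps := hA.sum_eq _
    _ = ∑ j ∈ A i, min (v i j) tps + ∑ k ∈ univ.erase i, ∑ j ∈ A k, min (v i j) tps :=
        (add_sum_erase _ _ (mem_univ i)).symm
    _ ≤ x + (n - 1 : ℝ) * max tps (2 * x) := add_le_add (sum_min_le_val _ _ _) hcount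

/-- every half-fair allocation gives every agent at least an
`n/(2n−1)` fraction of her truncated proportional share. -/
theorem stmt3 {ι : Type*} [Fintype ι] [DecidableEq ι] (n : ℕ) (hn : 1 ≤ n)
    (v : Fin n → ι → ℝ) (hv : ∀ i j, 0 ≤ v i j)
    (A : Fin n → Finset ι) (hA : isAlloc A) (hhf : halfFair v A)
    (i : Fin n) (tps : ℝ) (htps : isTPS n Finset.univ (v i) tps) :
    val (v i) (A i) ≥ ((n : ℝ) / (2 * (n : ℝ) - 1)) * tps :=
  stmt3_general n v A hA hhf i tps htps
end

section
/- Let k ≥ 2 and n = k². Consider the instance with n agents and n items (indexed 1,…,n) in which: for each agent i with 1 ≤ i ≤ k, v_i(j) = k if j ≡ i (mod k) and v_i(j) = 0 otherwise; and for each agent i with k < i ≤ n, v_i(j) = 1 for every item j. Then: (a) v_i(M) = n for every agent i (valuations are normalized) and TPS_i = 1 for every agent i with k < i ≤ n; (b) every allocation in which each agent i with k < i ≤ n receives strictly positive value has utilitarian social welfare Σ_i v_i(A_i) at most 2n − k < 2n; and (c) there exists an allocation with utilitarian social welfare n·k = n^{3/2}. -/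
open Finset

/-!
Every item is worth at most `k` to every agent, so the welfare is at most `k · n`. Each of the
`n - k` uniform agents with positive value holds at least one item, which then contributes at
most `1` instead of `k`; hence the welfare is at most `k · n - (k - 1)(n - k) = 2n - k` for
`n = k²`. Handing each residue class mod `k` to the agent who values it at `k` attains `k · n`.
-/

lemma card_filter_val_mod_eq {n m k r : ℕ} (hn : n = m * k) (hr : r < k) :
    #{j : Fin n | (j : ℕ) % k = r} = m := by
  subst hn
  have hcount := Nat.count_modEq_card (b := m * k) (by omega : 0 < k) r
  rw [Nat.mul_mod_left, Nat.mul_div_cancel _ (by omega), if_neg (Nat.not_lt_zero _), add_zero,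
    Nat.count_eq_card_filter_range, ← Nat.Iio_eq_range, ← Fin.map_valEmbedding_univ,
    filter_map, card_map] at hcount
  simpa [Function.comp_def, Nat.ModEq, Nat.mod_eq_of_lt hr] using hcount

lemma card_filter_le_val (n k : ℕ) : #{i : Fin n | k ≤ (i : ℕ)} = n - k := by
  have hsplit := card_filter_add_card_filter_not (s := (univ : Finset (Fin n)))
    (fun i : Fin n => (i : ℕ) < k)
  simp only [not_lt, card_univ, Fintype.card_fin, Fin.card_filter_val_lt] at hsplit
  omega

section Valuation

variable {ι : Type*} {v : ι → ℝ} {S : Finset ι}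

lemma val_eq_card_mul_of_forall_eq {c : ℝ} (hv : ∀ j ∈ S, v j = c) : val v S = #S * c := by
  rw [_root_.val, sum_congr rfl hv, sum_const, nsmul_eq_mul]

lemma val_le_mul_card {c : ℝ} (hv : ∀ j ∈ S, v j ≤ c) : val v S ≤ c * #S := by
  simpa [_root_.val, mul_comm] using sum_le_card_nsmul S v c hv

lemma val_le_mul_card_sub {c : ℝ} (hc : 1 ≤ c) (hv : ∀ j ∈ S, v j ≤ 1) (hS : S.Nonempty) :
    val v S ≤ c * #S - (c - 1) := by
  have hle : val v S ≤ #S := by simpa using val_le_mul_card hv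
  have hcard : (1 : ℝ) ≤ #S := by exact_mod_cast hS.card_pos
  nlinarith

lemma isTPS_one_of_forall_eq_one {k : ℕ} (hk : k ≠ 0) (hS : #S = k) (hv : ∀ j ∈ S, v j = 1) :
    isTPS k S v 1 := by
  have hsum : ∀ t : ℝ, (∑ j ∈ S, min (v j) t) / k = min 1 t := fun t => by
    rw [sum_congr rfl fun j hj => by rw [hv j hj], sum_const, hS, nsmul_eq_mul,
      mul_div_cancel_left₀ _ (by exact_mod_cast hk)]
  refine ⟨⟨zero_le_one, by rw [hsum, min_self]⟩, ?_⟩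
  rintro t ⟨-, ht⟩
  rw [hsum] at ht
  exact ht ▸ min_le_left 1 t

end Valuation

section Allocation

variable {ι : Type*} [Fintype ι] {n : ℕ}

lemma sum_card_of_isAlloc [DecidableEq ι] {A : Fin n → Finset ι} (hA : isAlloc A) :
    ∑ i, #(A i) = Fintype.card ι := by
  rw [← card_biUnion fun i _ j _ hij => hA.1 i j hij, hA.2, card_univ]

lemma sum_val_le_of_isAlloc [DecidableEq ι] {A : Fin n → Finset ι} (hA : isAlloc A)
    {v : Fin n → ι → ℝ} {c : ℝ} (hc : 1 ≤ c) {s : Finset (Fin n)} (hv : ∀ i j, v i j ≤ c)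
    (hs : ∀ i ∈ s, ∀ j, v i j ≤ 1) (hne : ∀ i ∈ s, (A i).Nonempty) :
    ∑ i, val (v i) (A i) ≤ c * Fintype.card ι - (c - 1) * #s := by
  have hagent : ∀ i, val (v i) (A i) ≤ c * #(A i) - if i ∈ s then c - 1 else 0 := fun i => by
    split_ifs with hi
    · exact val_le_mul_card_sub hc (fun j _ => hs i hi j) (hne i hi)
    · simpa using val_le_mul_card fun j _ => hv i j
  calc ∑ i, val (v i) (A i)
      ≤ ∑ i, (c * #(A i) - if i ∈ s then c - 1 else 0) := sum_le_sum fun i _ => hagent i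
    _ = c * Fintype.card ι - (c - 1) * #s := by
      rw [sum_sub_distrib, ← mul_sum, ← Nat.cast_sum, sum_card_of_isAlloc hA, sum_ite_mem,
        univ_inter, sum_const, nsmul_eq_mul, mul_comm (#s : ℝ)]

lemma isAlloc_fibers [DecidableEq ι] (f : ι → Fin n) :
    isAlloc fun i => ({j | f j = i} : Finset ι) := by
  refine ⟨fun i i' hii' => disjoint_filter.2 fun j _ hi hi' => hii' (hi ▸ hi'), ?_⟩
  exact eq_univ_of_forall fun j => mem_biUnion.2 ⟨f j, mem_univ _, by simp⟩

lemma sum_val_fibers (f : ι → Fin n) (v : Fin n → ι → ℝ) :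
    ∑ i, val (v i) {j | f j = i} = ∑ j, v (f j) j := by
  rw [← sum_fiberwise univ f fun j => v (f j) j]
  exact sum_congr rfl fun i _ => sum_congr rfl fun j hj => by rw [(mem_filter.1 hj).2]

end Allocation

/-- with `n = k²` agents and `n` items, where the first `k` agents
value items in their residue class mod `k` at `k` (and other items at `0`), and
the remaining agents value every item at `1`:
(a) `v_i(M) = n` for every agent (valuations normalized) and `TPS_i = 1` for every
uniform agent; (b) every allocation giving each uniform agent positive value has
utilitarian welfare at most `2n − k`, which is less than `2n`; and (c) some
allocation has utilitarian welfare `n·k = n^{3/2}`. -/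
theorem stmt16 (k : ℕ) (hk : 2 ≤ k)
    (v : Fin (k ^ 2) → Fin (k ^ 2) → ℝ)
    (hbig : ∀ i j : Fin (k ^ 2), (i : ℕ) < k →
      v i j = if (j : ℕ) % k = (i : ℕ) % k then (k : ℝ) else 0)
    (hunif : ∀ i j : Fin (k ^ 2), k ≤ (i : ℕ) → v i j = 1) :
    (∀ i, val (v i) Finset.univ = ((k : ℝ) ^ 2)) ∧
    (∀ i : Fin (k ^ 2), k ≤ (i : ℕ) → isTPS (k ^ 2) Finset.univ (v i) 1) ∧
    (∀ A : Fin (k ^ 2) → Finset (Fin (k ^ 2)), isAlloc A →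
      (∀ i : Fin (k ^ 2), k ≤ (i : ℕ) → 0 < val (v i) (A i)) →
      (∑ i, val (v i) (A i)) ≤ 2 * ((k : ℝ) ^ 2) - k) ∧
    (2 * ((k : ℝ) ^ 2) - k < 2 * ((k : ℝ) ^ 2)) ∧
    (∃ A : Fin (k ^ 2) → Finset (Fin (k ^ 2)), isAlloc A ∧
      (∑ i, val (v i) (A i)) = ((k : ℝ) ^ 2) * k) := by
  have hk0 : 0 < k := by omega
  have hkR : (2 : ℝ) ≤ k := by exact_mod_cast hk
  have hvk : ∀ i j, v i j ≤ k := fun i j => by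
    rcases lt_or_ge (i : ℕ) k with hi | hi
    · rw [hbig i j hi]; split_ifs <;> linarith
    · rw [hunif i j hi]; linarith
  refine ⟨fun i => ?_, fun i hi => ?_, fun A hA hpos => ?_, by linarith, ?_⟩
  · rcases lt_or_ge (i : ℕ) k with hi | hi
    · rw [_root_.val, sum_congr rfl fun j _ => hbig i j hi, ← sum_filter, sum_const,
        card_filter_val_mod_eq (sq k) (Nat.mod_lt _ hk0), nsmul_eq_mul]
      ring
    · rw [val_eq_card_mul_of_forall_eq fun j _ => hunif i j hi]
      simp
  · exact isTPS_one_of_forall_eq_one (pow_ne_zero 2 hk0.ne') (by simp) fun j _ => hunif i j hi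
  · have hne : ∀ i ∈ ({i | k ≤ (i : ℕ)} : Finset (Fin (k ^ 2))), (A i).Nonempty := fun i hi =>
      nonempty_of_ne_empty fun h => by
        simpa [h, _root_.val] using hpos i (mem_filter.1 hi).2
    have hwelfare := sum_val_le_of_isAlloc hA (by linarith) hvk
      (fun i hi j => (hunif i j (mem_filter.1 hi).2).le) hne
    rw [card_filter_le_val, Nat.cast_sub (Nat.le_self_pow two_ne_zero k)] at hwelfare
    simp only [Fintype.card_fin, Nat.cast_pow] at hwelfare
    linarith
  · let residue : Fin (k ^ 2) → Fin (k ^ 2) := fun j =>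
      ⟨j % k, (Nat.mod_lt _ hk0).trans_le (Nat.le_self_pow two_ne_zero k)⟩
    refine ⟨_, isAlloc_fibers residue, ?_⟩
    rw [sum_val_fibers, sum_congr rfl fun j _ => ?_, sum_const, card_univ, Fintype.card_fin,
      nsmul_eq_mul, Nat.cast_pow]
    rw [hbig _ _ (Nat.mod_lt _ hk0), if_pos (Nat.mod_mod _ _).symm]
end
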